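/- arXiv:1803.09619 — 2 statements merged into one kernel-verified Lean document; each statement's English description precedes it below -/
import Mathlib

section
/- Let T be a set of first-order L-sentences and let Int^T(X) be the set of interpretations of L on X that satisfy every sentence of T. Then Int^T(X) is isomorphism-invariant, and every maximal element and every minimal element of (Int^T(X), ⊆) is a reversible interpretation. -/
open FirstOrder

/-- An interpretation of the relational language `L` on the set `X`: an assignment of an
`n`-ary relation on `X` to each `n`-ary relation symbol of `L`. -/
def Interp (L : FirstOrder.Language) (X : Type*) : Type _ :=
  ∀ n : ℕ, L.Relations n → Set (Fin n → X)

namespace Interp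

variable {L : FirstOrder.Language} {X : Type*}

/-- The `L`-structure with universe `X` determined by an interpretation. -/
def str [L.IsRelational] (ρ : Interp L X) : L.Structure X where
  funMap := fun {_} f _ => isEmptyElim f
  RelMap := fun {n} r x => x ∈ ρ n r

/-- `ρ` satisfies the `L`-sentence `φ` (as a structure with universe `X`). -/
def Models [L.IsRelational] (ρ : Interp L X) (φ : L.Sentence) : Prop :=
  @FirstOrder.Language.Sentence.Realize L X ρ.str φ

/-- `ρ ⊆ σ`: every relation of `ρ` is contained in the corresponding relation of `σ`. -/
def le (ρ σ : Interp L X) : Prop := ∀ n (r : L.Relations n), ρ n r ⊆ σ n r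

/-- The image `g[ρ]` of an interpretation under a bijection `g` of `X`:
`r(x)` holds in `g[ρ]` iff `r(g⁻¹ ∘ x)` holds in `ρ`. -/
def img (g : X ≃ X) (ρ : Interp L X) : Interp L X :=
  fun n r => {x | (fun k => g.symm (x k)) ∈ ρ n r}

/-- A set of interpretations is isomorphism-invariant iff it is closed under
images by bijections of `X`. -/
def IsoInvariant (C : Set (Interp L X)) : Prop :=
  ∀ ρ ∈ C, ∀ g : X ≃ X, img g ρ ∈ C

/-- An interpretation is reversible iff every bijective homomorphism from it to itself
is an automorphism. -/
def Reversible (ρ : Interp L X) : Prop :=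
  ∀ f : X ≃ X,
    (∀ n (r : L.Relations n), ∀ x ∈ ρ n r, (fun k => f (x k)) ∈ ρ n r) →
    ∀ n (r : L.Relations n), ∀ x : Fin n → X, x ∈ ρ n r ↔ (fun k => f (x k)) ∈ ρ n r

/-- `τ` is a maximal element of `C` with respect to `⊆`. -/
def MaxIn (C : Set (Interp L X)) (τ : Interp L X) : Prop :=
  τ ∈ C ∧ ¬∃ σ ∈ C, le τ σ ∧ τ ≠ σ

/-- `τ` is a minimal element of `C` with respect to `⊆`. -/
def MinIn (C : Set (Interp L X)) (τ : Interp L X) : Prop :=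
  τ ∈ C ∧ ¬∃ σ ∈ C, le σ τ ∧ σ ≠ τ

end Interp

/-- The set `Int^T(X)` of all interpretations of `L` on `X` satisfying every sentence of `T`. -/
def IntT (L : FirstOrder.Language) [L.IsRelational] (X : Type*) (T : L.Theory) :
    Set (Interp L X) :=
  {ρ | ∀ φ ∈ T, ρ.Models φ}

namespace Interp

variable {L : FirstOrder.Language} {X : Type*}

@[simp]
lemma mem_img {g : X ≃ X} {ρ : Interp L X} {n : ℕ} {r : L.Relations n} {x : Fin n → X} :
    x ∈ img g ρ n r ↔ (fun k => g.symm (x k)) ∈ ρ n r :=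
  Iff.rfl

lemma models_img_iff [L.IsRelational] (ρ : Interp L X) (g : X ≃ X) (φ : L.Sentence) :
    (img g ρ).Models φ ↔ ρ.Models φ := by
  let M := ρ.str
  let N := (img g ρ).str
  have map_rel : ∀ {n : ℕ} (r : L.Relations n) (x : Fin n → X),
      @Language.Structure.RelMap L X N n r (g ∘ x) ↔ @Language.Structure.RelMap L X M n r x :=
    fun {n} r x => show (fun k => g.symm (g (x k))) ∈ ρ n r ↔ x ∈ ρ n r by simp
  let e : @Language.Equiv L X X M N := @Language.Equiv.mk L X X M N g isEmptyElim map_rel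
  exact (@Language.StrongHomClass.realize_sentence L X X M N _ _ _ e φ).symm

lemma le_img_symm_of_hom {τ : Interp L X} {f : X ≃ X}
    (hf : ∀ n (r : L.Relations n), ∀ x ∈ τ n r, (fun k => f (x k)) ∈ τ n r) :
    le τ (img f.symm τ) :=
  fun n r x hx => by simpa using hf n r x hx

lemma img_le_of_hom {τ : Interp L X} {f : X ≃ X}
    (hf : ∀ n (r : L.Relations n), ∀ x ∈ τ n r, (fun k => f (x k)) ∈ τ n r) :
    le (img f τ) τ :=
  fun n r x hx => by simpa using hf n r _ hx

variable {C : Set (Interp L X)} {τ : Interp L X}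

/-- A bijective endomorphism `f` of `τ` gives `τ ⊆ f⁻¹[τ]`, and `f⁻¹[τ] ∈ C`. -/
theorem MaxIn.reversible (hC : IsoInvariant C) (hτ : MaxIn C τ) : Reversible τ := by
  intro f hf n r x
  have img_eq : τ = img f.symm τ := by
    by_contra hne
    exact hτ.2 ⟨_, hC τ hτ.1 f.symm, le_img_symm_of_hom hf, hne⟩
  refine ⟨hf n r x, fun hx => ?_⟩
  rw [img_eq]
  simpa using hx

/-- A bijective endomorphism `f` of `τ` gives `f[τ] ⊆ τ`, and `f[τ] ∈ C`. -/
theorem MinIn.reversible (hC : IsoInvariant C) (hτ : MinIn C τ) : Reversible τ := by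
  intro f hf n r x
  have img_eq : img f τ = τ := by
    by_contra hne
    exact hτ.2 ⟨_, hC τ hτ.1 f, img_le_of_hom hf, hne⟩
  refine ⟨hf n r x, fun hx => ?_⟩
  rw [← img_eq] at hx
  simpa using hx

end Interp

lemma IntT.isoInvariant (L : FirstOrder.Language) [L.IsRelational] (X : Type*) (T : L.Theory) :
    Interp.IsoInvariant (IntT L X T) :=
  fun ρ hρ g φ hφ => (Interp.models_img_iff ρ g φ).2 (hρ φ hφ)

theorem stmt_3_general (L : FirstOrder.Language) [L.IsRelational] (X : Type*)
    (T : L.Theory) :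
    Interp.IsoInvariant (IntT L X T) ∧
    (∀ τ : Interp L X, Interp.MaxIn (IntT L X T) τ → Interp.Reversible τ) ∧
    (∀ τ : Interp L X, Interp.MinIn (IntT L X T) τ → Interp.Reversible τ) :=
  ⟨IntT.isoInvariant L X T, fun _ hτ => hτ.reversible (IntT.isoInvariant L X T),
    fun _ hτ => hτ.reversible (IntT.isoInvariant L X T)⟩

/-- For any set `T` of first-order `L`-sentences, the set `Int^T(X)` is
isomorphism-invariant, and all of its maximal and minimal elements (w.r.t. `⊆`)
are reversible interpretations. -/
theorem stmt_3 (L : FirstOrder.Language) [L.IsRelational] (X : Type*) [Nonempty X]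
    (T : L.Theory) :
    Interp.IsoInvariant (IntT L X T) ∧
    (∀ τ : Interp L X, Interp.MaxIn (IntT L X T) τ → Interp.Reversible τ) ∧
    (∀ τ : Interp L X, Interp.MinIn (IntT L X T) τ → Interp.Reversible τ) :=
  stmt_3_general L X T
end

section
/- Let φ be a universal first-order L-sentence and let Λ be a nonempty set of interpretations of L on X that is a chain with respect to ⊆ and such that every member of Λ satisfies φ. Then the union interpretation ∪Λ (in which a relation symbol r holds of a tuple x iff r(x) holds in some member of Λ) also satisfies φ. Dually, the intersection interpretation ∩Λ (in which r(x) holds iff r(x) holds in every member of Λ) also satisfies φ. -/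
/-!
Order a directed family `Λ` by `⊆` and let `σ` run along `Λ` upwards. Each atomic fact `r(x)`
of `⋃ Λ` holds in all sufficiently large `σ`, and each atomic fact failing in `⋃ Λ` fails in
every `σ`. A quantifier-free `ψ` mentions finitely many atoms, so for each assignment `ψ`
eventually has the same truth value in `σ` as in `⋃ Λ`; as every `σ` satisfies `∀ x̄, ψ`, so does
`⋃ Λ`. Running downwards gives the same for `⋂ Λ`.
-/

open FirstOrder FirstOrder.Language Filter

/-- A first-order sentence is universal iff it is of the form `∀ v₁ … ∀ v_k, ψ`
with `ψ` quantifier-free. -/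
def IsUniversalSentence {L : FirstOrder.Language} (φ : L.Sentence) : Prop :=
  ∃ (k : ℕ) (ψ : L.BoundedFormula Empty k), ψ.IsQF ∧ φ = ψ.alls

namespace Interp

variable {L : FirstOrder.Language} {X : Type*}

instance : PartialOrder (Interp L X) :=
  inferInstanceAs (PartialOrder (∀ n, L.Relations n → Set (Fin n → X)))

def sUnion (Λ : Set (Interp L X)) : Interp L X := fun n r => {x | ∃ ρ ∈ Λ, x ∈ ρ n r}

def sInter (Λ : Set (Interp L X)) : Interp L X := fun n r => {x | ∀ ρ ∈ Λ, x ∈ ρ n r}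

variable [L.IsRelational]

theorem realize_term_eq (ρ σ : Interp L X) {α : Type*} (t : L.Term α) (v : α → X) :
    @Term.realize L X ρ.str α v t = @Term.realize L X σ.str α v t := by
  cases t with
  | var => rfl
  | func f _ => exact isEmptyElim f

theorem eventually_realize_iff_of_isQF {F : Filter (Interp L X)} {U : Interp L X}
    (hatom : ∀ n (r : L.Relations n) (x : Fin n → X), ∀ᶠ σ in F, x ∈ σ n r ↔ x ∈ U n r)
    {α : Type*} {k : ℕ} {ψ : L.BoundedFormula α k} (hψ : ψ.IsQF) (v : α → X) (xs : Fin k → X) :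
    ∀ᶠ σ in F, @BoundedFormula.Realize L X σ.str α k ψ v xs ↔
      @BoundedFormula.Realize L X U.str α k ψ v xs := by
  induction hψ with
  | falsum => exact .of_forall fun _ => Iff.rfl
  | of_isAtomic h =>
    cases h with
    | equal t₁ t₂ =>
      refine .of_forall fun σ => ?_
      simp only [BoundedFormula.realize_bdEqual, realize_term_eq σ U]
    | rel R ts =>
      refine (hatom _ R fun i => @Term.realize L X U.str _ (Sum.elim v xs) (ts i)).mono
        fun σ hσ => ?_
      simp only [BoundedFormula.realize_rel, realize_term_eq σ U]
      exact hσ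
  | imp _ _ ih₁ ih₂ =>
    filter_upwards [ih₁, ih₂] with σ h₁ h₂
    simp only [BoundedFormula.realize_imp, h₁, h₂]

theorem models_alls_iff (ρ : Interp L X) {k : ℕ} (ψ : L.BoundedFormula Empty k) :
    ρ.Models ψ.alls ↔ ∀ xs : Fin k → X, @BoundedFormula.Realize L X ρ.str Empty k ψ default xs :=
  @BoundedFormula.realize_alls L X ρ.str Empty k ψ default

theorem models_of_eventually_models {F : Filter (Interp L X)} [F.NeBot] {U : Interp L X}
    (hatom : ∀ n (r : L.Relations n) (x : Fin n → X), ∀ᶠ σ in F, x ∈ σ n r ↔ x ∈ U n r)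
    {φ : L.Sentence} (hφ : IsUniversalSentence φ) (hsat : ∀ᶠ σ in F, σ.Models φ) :
    U.Models φ := by
  obtain ⟨k, ψ, hψ, rfl⟩ := hφ
  refine (models_alls_iff U ψ).2 fun xs => ?_
  obtain ⟨σ, hσ, hσU⟩ := (hsat.and (eventually_realize_iff_of_isQF hatom hψ default xs)).exists
  exact hσU.1 ((models_alls_iff σ ψ).1 hσ xs)

theorem models_sUnion {Λ : Set (Interp L X)} (hne : Λ.Nonempty) (hdir : DirectedOn (· ≤ ·) Λ)
    {φ : L.Sentence} (hφ : IsUniversalSentence φ) (hsat : ∀ ρ ∈ Λ, ρ.Models φ) :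
    (sUnion Λ).Models φ := by
  have := hdir.isDirectedOrder
  have := hne.to_subtype
  refine models_of_eventually_models (F := map Subtype.val (atTop : Filter Λ))
    (fun n r x => eventually_map.2 ?_) hφ
    (eventually_map.2 (.of_forall fun σ => hsat σ σ.2))
  by_cases hx : x ∈ sUnion Λ n r
  · obtain ⟨ρ, hρ, hxρ⟩ := hx
    exact (eventually_ge_atTop ⟨ρ, hρ⟩).mono fun σ hσ =>
      iff_of_true (hσ n r hxρ) ⟨ρ, hρ, hxρ⟩
  · exact .of_forall fun σ => iff_of_false (fun h => hx ⟨σ, σ.2, h⟩) hx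

theorem models_sInter {Λ : Set (Interp L X)} (hne : Λ.Nonempty) (hdir : DirectedOn (· ≥ ·) Λ)
    {φ : L.Sentence} (hφ : IsUniversalSentence φ) (hsat : ∀ ρ ∈ Λ, ρ.Models φ) :
    (sInter Λ).Models φ := by
  have := hdir.isCodirectedOrder
  have := hne.to_subtype
  refine models_of_eventually_models (F := map Subtype.val (atBot : Filter Λ))
    (fun n r x => eventually_map.2 ?_) hφ
    (eventually_map.2 (.of_forall fun σ => hsat σ σ.2))
  by_cases hx : x ∈ sInter Λ n r
  · exact .of_forall fun σ => iff_of_true (hx σ σ.2) hx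
  · obtain ⟨ρ, hρ, hxρ⟩ : ∃ ρ ∈ Λ, x ∉ ρ n r := by simpa [sInter] using hx
    exact (eventually_le_atBot ⟨ρ, hρ⟩).mono fun σ hσ =>
      iff_of_false (fun h => hxρ (hσ n r h)) hx

end Interp

theorem stmt_4_general (L : FirstOrder.Language) [L.IsRelational] (X : Type*)
    (φ : L.Sentence) (hφ : IsUniversalSentence φ)
    (Λ : Set (Interp L X)) (hne : Λ.Nonempty)
    (hchain : ∀ ρ ∈ Λ, ∀ σ ∈ Λ, Interp.le ρ σ ∨ Interp.le σ ρ)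
    (hsat : ∀ ρ ∈ Λ, ρ.Models φ) :
    Interp.Models (fun n r => {x | ∃ ρ ∈ Λ, x ∈ ρ n r} : Interp L X) φ ∧
    Interp.Models (fun n r => {x | ∀ ρ ∈ Λ, x ∈ ρ n r} : Interp L X) φ := by
  have hle : IsChain (· ≤ ·) Λ := fun ρ hρ σ hσ _ => hchain ρ hρ σ hσ
  have hge : IsChain (· ≥ ·) Λ := fun ρ hρ σ hσ _ => hchain σ hσ ρ hρ
  exact ⟨Interp.models_sUnion hne hle.directedOn hφ hsat,
    Interp.models_sInter hne hge.directedOn hφ hsat⟩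

/-- A universal first-order sentence satisfied by every member of a nonempty `⊆`-chain of
interpretations of `L` on `X` is also satisfied by the union interpretation and by the
intersection interpretation of the chain. -/
theorem stmt_4 (L : FirstOrder.Language) [L.IsRelational] (X : Type*) [Nonempty X]
    (φ : L.Sentence) (hφ : IsUniversalSentence φ)
    (Λ : Set (Interp L X)) (hne : Λ.Nonempty)
    (hchain : ∀ ρ ∈ Λ, ∀ σ ∈ Λ, Interp.le ρ σ ∨ Interp.le σ ρ)
    (hsat : ∀ ρ ∈ Λ, ρ.Models φ) :
    Interp.Models (fun n r => {x | ∃ ρ ∈ Λ, x ∈ ρ n r} : Interp L X) φ ∧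
    Interp.Models (fun n r => {x | ∀ ρ ∈ Λ, x ∈ ρ n r} : Interp L X) φ :=
  stmt_4_general L X φ hφ Λ hne hchain hsat
end
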